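/- 𝔎_{r,s} equals the F-span of those e_I with e_I ∈ 𝔊_{r,s} and e_I² = −1, and 𝔓_{r,s} equals the F-span of those e_I with e_I ∈ 𝔊_{r,s} and e_I² = +1. -/

import Mathlib

/-
Setting (Eberlein, "Isometries of Clifford Algebras II"):
`F` a field with `char F ≠ 2`, `n = r + s > 0`, and `Cl(r,s)` the Clifford algebra of `F^n`
in which `eᵢ·eⱼ = -eⱼ·eᵢ` for `i ≠ j`, `eᵢ² = -1` for the first `r` indices and
`eᵢ² = +1` for the last `s` indices.
-/

open CliffordAlgebra

namespace CliffPaper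

/-- The quadratic form `q(x) = -x₁² - … - x_r² + x_{r+1}² + … + x_n²` on `F^(r+s)`. -/
noncomputable def Qf (F : Type*) [Field F] (r s : ℕ) : QuadraticForm F (Fin (r + s) → F) :=
  QuadraticMap.weightedSumSquares F (fun i : Fin (r + s) => if (i : ℕ) < r then (-1 : F) else 1)

/-- The Clifford algebra `Cl(r,s)`. -/
abbrev Cl (F : Type*) [Field F] (r s : ℕ) : Type _ := CliffordAlgebra (Qf F r s)

/-- The generator `e_i` of `Cl(r,s)` (`i` is a zero-based index, so `e_i² = -1` for `i < r`
and `e_i² = +1` for `r ≤ i`). -/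
noncomputable def gen (F : Type*) [Field F] (r s : ℕ) (i : Fin (r + s)) : Cl F r s :=
  ι (Qf F r s) (Pi.single i 1)

/-- For a multi-index `I = {i₁ < … < i_k}`, the product `e_I = e_{i₁} ⋯ e_{i_k}`. -/
noncomputable def eProd (F : Type*) [Field F] (r s : ℕ) (I : Finset (Fin (r + s))) : Cl F r s :=
  ((I.sort (· ≤ ·)).map (gen F r s)).prod

/-- Clifford conjugation: the unique anti-automorphism `c` of `Cl(r,s)` with `c ∘ c = id` and
`c(v) = -v` for all `v ∈ F^n`; concretely, reversal composed with the grade involution. -/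
noncomputable def conj (F : Type*) [Field F] (r s : ℕ) : Cl F r s →ₗ[F] Cl F r s :=
  (reverse (Q := Qf F r s)).comp (involute (Q := Qf F r s)).toLinearMap

theorem conj_mul (F : Type*) [Field F] (r s : ℕ) (a b : Cl F r s) :
    conj F r s (a * b) = conj F r s b * conj F r s a := by
  simp [conj, reverse.map_mul]

/-- `𝔊_{r,s} = {x ∈ Cl(r,s) : c(x) = -x}`, the `-1`-eigenspace of Clifford conjugation,
as an `F`-subspace of `Cl(r,s)`. -/
noncomputable def Gsub (F : Type*) [Field F] (r s : ℕ) : Submodule F (Cl F r s) :=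
  LinearMap.ker (conj F r s + LinearMap.id)

theorem mem_Gsub {F : Type*} [Field F] {r s : ℕ} (x : Cl F r s) :
    x ∈ Gsub F r s ↔ conj F r s x = -x := by
  simp [Gsub, LinearMap.mem_ker, add_eq_zero_iff_eq_neg]

attribute [local instance] LieRing.ofAssociativeRing

/-- `𝔊_{r,s}` as a Lie subalgebra of `Cl(r,s)` with the commutator bracket
`⁅x,y⁆ = x*y - y*x`. -/
noncomputable def GLie (F : Type*) [Field F] (r s : ℕ) : LieSubalgebra F (Cl F r s) where
  toSubmodule := Gsub F r s
  lie_mem' := by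
    intro x y hx hy
    have hx' : x ∈ Gsub F r s := hx
    have hy' : y ∈ Gsub F r s := hy
    show ⁅x, y⁆ ∈ Gsub F r s
    rw [mem_Gsub] at hx' hy' ⊢
    rw [Ring.lie_def, map_sub, conj_mul, conj_mul, hx', hy']
    noncomm_ring

/-- `𝔎_{r,s}`: the `+1`-eigenspace of `β` restricted to `𝔊_{r,s}`. -/
noncomputable def Ksub (F : Type*) [Field F] (r s : ℕ) (β : Cl F r s ≃ₐ[F] Cl F r s) :
    Submodule F (Cl F r s) :=
  LinearMap.ker (β.toLinearMap - LinearMap.id) ⊓ Gsub F r s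

/-- `𝔓_{r,s}`: the `-1`-eigenspace of `β` restricted to `𝔊_{r,s}`. -/
noncomputable def Psub (F : Type*) [Field F] (r s : ℕ) (β : Cl F r s ≃ₐ[F] Cl F r s) :
    Submodule F (Cl F r s) :=
  LinearMap.ker (β.toLinearMap + LinearMap.id) ⊓ Gsub F r s

/-- The center `𝔷(𝔎_{r,s}) = {x ∈ 𝔎_{r,s} : [x,y] = 0 for all y ∈ 𝔎_{r,s}}`. -/
noncomputable def ZKsub (F : Type*) [Field F] (r s : ℕ) (β : Cl F r s ≃ₐ[F] Cl F r s) :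
    Submodule F (Cl F r s) where
  carrier := {x | x ∈ Ksub F r s β ∧ ∀ y ∈ Ksub F r s β, x * y = y * x}
  zero_mem' := ⟨zero_mem _, fun y _ => by simp⟩
  add_mem' := fun {a b} ha hb => ⟨add_mem ha.1 hb.1, fun y hy => by
    rw [add_mul, mul_add, ha.2 y hy, hb.2 y hy]⟩
  smul_mem' := fun c a ha => ⟨Submodule.smul_mem _ c ha.1, fun y hy => by
    rw [smul_mul_assoc, mul_smul_comm, ha.2 y hy]⟩

/-- `𝔥_{r,s}`: the span of the `e_I` with `|I| ≡ 1, 2 (mod 4)` and `I ≠ {1,…,n}`. -/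
noncomputable def Hsub (F : Type*) [Field F] (r s : ℕ) : Submodule F (Cl F r s) :=
  Submodule.span F {x | ∃ I : Finset (Fin (r + s)), I.Nonempty ∧ I ≠ Finset.univ ∧
    (I.card % 4 = 1 ∨ I.card % 4 = 2) ∧ x = eProd F r s I}

/-- The volume element `ω = e₁e₂⋯e_n`. -/
noncomputable def omegaEl (F : Type*) [Field F] (r s : ℕ) : Cl F r s :=
  eProd F r s Finset.univ

/-!
The monomials `e_I` span `Cl(r,s)` and are eigenvectors of both `c` and `β`, with eigenvalues
`±1`. Hence every joint eigenspace of `c` and `β` is spanned by the `e_I` it contains. For the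
sign `λ` with `β(e_I) = λ e_I` one has `c(e_I) e_I = λ`, so an `e_I ∈ 𝔊_{r,s}`, i.e. with
`c(e_I) = -e_I`, satisfies `e_I² = -λ`: it lies in `𝔎_{r,s}` iff `e_I² = -1` and in `𝔓_{r,s}`
iff `e_I² = 1`.
-/

section SignEigenspace

variable {F V ι : Type*} [Field F] [AddCommGroup V] [Module F V]

/-- The map `id + ε • f` sends each `b i` to `2 • b i` or to `0`, and doubles the `ε`-eigenspace
of `f`. -/
theorem _root_.Module.End.eigenspace_inf_span_image (h2 : (2 : F) ≠ 0) {f : Module.End F V}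
    {b : ι → V} {S : Set ι} (hb : ∀ i ∈ S, f (b i) = b i ∨ f (b i) = -b i) {ε : F}
    (hε : ε = 1 ∨ ε = -1) :
    f.eigenspace ε ⊓ Submodule.span F (b '' S) =
      Submodule.span F (b '' {i | i ∈ S ∧ f (b i) = ε • b i}) := by
  have hεε : ε * ε = 1 := by rcases hε with rfl | rfl <;> norm_num
  set P : V →ₗ[F] V := LinearMap.id + ε • f
  have hP : ∀ x, f x = ε • x → P x = (2 : F) • x := fun x hx => by
    simp [P, hx, smul_smul, hεε, two_smul]
  apply le_antisymm
  · rintro x ⟨hx, hxS⟩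
    have hPx : P x ∈ Submodule.span F (b '' {i | i ∈ S ∧ f (b i) = ε • b i}) := by
      have hmap := Submodule.mem_map_of_mem (f := P) hxS
      rw [Submodule.map_span, ← Set.image_comp] at hmap
      refine Submodule.span_le.mpr ?_ hmap
      rintro _ ⟨i, hi, rfl⟩
      by_cases hfi : f (b i) = ε • b i
      · rw [Function.comp_apply, hP _ hfi]
        exact Submodule.smul_mem _ _ (Submodule.subset_span ⟨i, ⟨hi, hfi⟩, rfl⟩)
      · have hPi : P (b i) = 0 := by
          rcases hε with rfl | rfl <;> rcases hb i hi with h | h <;> simp_all [P]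
        simp [hPi]
    rw [← inv_smul_smul₀ h2 x, ← hP x (Module.End.mem_eigenspace_iff.mp hx)]
    exact Submodule.smul_mem _ _ hPx
  · rw [Submodule.span_le]
    rintro _ ⟨i, ⟨hi, hfi⟩, rfl⟩
    exact ⟨Module.End.mem_eigenspace_iff.mpr hfi,
      Submodule.subset_span (Set.mem_image_of_mem b hi)⟩

end SignEigenspace

section Anticommute

variable {R A : Type*} [CommRing R] [Ring A] [Algebra R A]

theorem _root_.List.prod_mul_of_forall_anticomm {a : A} {l : List A}
    (h : ∀ b ∈ l, b * a = -(a * b)) : l.prod * a = (-1 : R) ^ l.length • (a * l.prod) := by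
  induction l with
  | nil => simp
  | cons b t ih =>
    rw [List.forall_mem_cons] at h
    rw [List.prod_cons, mul_assoc, ih h.2, mul_smul_comm, ← mul_assoc, h.1, List.length_cons,
      pow_succ', mul_smul, neg_mul, smul_neg, neg_one_smul, mul_assoc]

theorem _root_.List.prod_reverse_of_pairwise_anticomm {l : List A}
    (h : l.Pairwise fun a b => b * a = -(a * b)) :
    l.reverse.prod = (-1 : R) ^ l.length.choose 2 • l.prod := by
  induction l with
  | nil => simp
  | cons a t ih =>
    rw [List.pairwise_cons] at h
    rw [List.reverse_cons, List.prod_append, List.prod_singleton, ih h.2, smul_mul_assoc,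
      List.prod_mul_of_forall_anticomm (R := R) h.1, smul_smul, ← pow_add, List.length_cons,
      Nat.choose_succ_succ', Nat.choose_one_right, add_comm, List.prod_cons]

end Anticommute

section CliffordConjugation

variable {R M : Type*} [CommRing R] [AddCommGroup M] [Module R M] {Q : QuadraticForm R M}

theorem _root_.CliffordAlgebra.reverse_involute_prod_map_ι_mul_self (l : List M) :
    reverse (involute (l.map (ι Q)).prod) * (l.map (ι Q)).prod =
      algebraMap R _ (l.map fun m => -Q m).prod := by
  induction l with
  | nil => simp
  | cons m t ih =>
    simp only [List.map_cons, List.prod_cons, map_mul, reverse.map_mul, involute_ι, reverse_ι,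
      map_neg]
    rw [mul_assoc, ← mul_assoc (-ι Q m), neg_mul, ι_sq_scalar, ← map_neg, ← mul_assoc,
      ← Algebra.commutes, mul_assoc, ih, ← map_mul]

end CliffordConjugation

theorem _root_.Finset.prod_map_sort {α M : Type*} [LinearOrder α] [CommMonoid M] (s : Finset α)
    (f : α → M) : ((s.sort (· ≤ ·)).map f).prod = ∏ i ∈ s, f i := by
  rw [Finset.prod_eq_multiset_prod, ← Multiset.prod_coe, ← Multiset.map_coe, Finset.sort_eq]

section Monomials

open Submodule

variable {F : Type*} [Field F] {r s : ℕ}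

/-- The sign by which `β` acts on `e_i`; it is also `-q(e_i)`. -/
def genSign (F : Type*) [Field F] (r s : ℕ) (i : Fin (r + s)) : F :=
  if (i : ℕ) < r then 1 else -1

theorem Qf_single_one (i : Fin (r + s)) : Qf F r s (Pi.single i 1) = -genSign F r s i := by
  rw [Qf, QuadraticMap.weightedSumSquares_apply, Finset.sum_eq_single i]
  · by_cases h : (i : ℕ) < r <;> simp [genSign, h]
  · intro j _ hj; simp [hj]
  · simp

theorem gen_mul_self (i : Fin (r + s)) :
    gen F r s i * gen F r s i = -algebraMap F _ (genSign F r s i) := by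
  rw [gen, ι_sq_scalar, Qf_single_one, map_neg]

theorem gen_mul_gen_of_ne {i j : Fin (r + s)} (h : i ≠ j) :
    gen F r s j * gen F r s i = -(gen F r s i * gen F r s j) := by
  refine ι_mul_ι_comm_of_isOrtho ?_
  rw [QuadraticMap.isOrtho_def]
  simp only [Qf, QuadraticMap.weightedSumSquares_apply, Pi.add_apply, Pi.single_apply,
    smul_eq_mul, ← Finset.sum_add_distrib]
  refine Finset.sum_congr rfl fun k _ => ?_
  by_cases hki : k = i <;> by_cases hkj : k = j <;> simp_all

theorem eProd_eq_prod_map_ι (I : Finset (Fin (r + s))) :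
    eProd F r s I = (((I.sort (· ≤ ·)).map fun i => Pi.single i 1).map (ι (Qf F r s))).prod := by
  rw [eProd, List.map_map]
  rfl

@[simp] theorem eProd_empty : eProd F r s ∅ = 1 := by simp [eProd]

theorem eProd_insert_of_forall_lt {i : Fin (r + s)} {I : Finset (Fin (r + s))}
    (h : ∀ j ∈ I, i < j) : eProd F r s (insert i I) = gen F r s i * eProd F r s I := by
  rw [eProd, Finset.sort_insert _ (fun j hj => (h j hj).le) (fun hi => lt_irrefl i (h i hi)),
    List.map_cons, List.prod_cons, eProd]

theorem gen_mul_eProd (I : Finset (Fin (r + s))) (i : Fin (r + s)) :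
    ∃ (c : F) (J : Finset (Fin (r + s))), J ⊆ insert i I ∧
      gen F r s i * eProd F r s I = c • eProd F r s J := by
  induction I using Finset.induction_on_min generalizing i with
  | empty =>
    refine ⟨1, {i}, by simp, ?_⟩
    rw [one_smul, ← Finset.insert_empty, eProd_insert_of_forall_lt (by simp)]
  | insert a I ha ih =>
    rw [eProd_insert_of_forall_lt ha]
    rcases lt_trichotomy i a with hia | rfl | hai
    · refine ⟨1, insert i (insert a I), subset_rfl, ?_⟩
      rw [one_smul, eProd_insert_of_forall_lt, eProd_insert_of_forall_lt ha]
      simpa [hia] using fun j hj => hia.trans (ha j hj)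
    · refine ⟨-genSign F r s i, I, ?_, ?_⟩
      · exact (Finset.subset_insert i I).trans (Finset.subset_insert i _)
      · rw [← mul_assoc, gen_mul_self, Algebra.smul_def, map_neg]
    · obtain ⟨c, J, hJ, he⟩ := ih i
      refine ⟨-c, insert a J, ?_, ?_⟩
      · intro j hj
        rcases Finset.mem_insert.mp hj with rfl | hj
        · simp
        · rcases Finset.mem_insert.mp (hJ hj) with rfl | hj <;> simp [*]
      · have haJ : ∀ j ∈ J, a < j := fun j hj => by
          rcases Finset.mem_insert.mp (hJ hj) with rfl | hj
          exacts [hai, ha j hj]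
        rw [← mul_assoc, gen_mul_gen_of_ne hai.ne, neg_mul, mul_assoc, he, mul_smul_comm,
          ← eProd_insert_of_forall_lt haJ, neg_smul]

theorem gen_mul_mem_span_range_eProd {x : Cl F r s} (hx : x ∈ span F (Set.range (eProd F r s)))
    (i : Fin (r + s)) : gen F r s i * x ∈ span F (Set.range (eProd F r s)) := by
  have hmap := mem_map_of_mem (f := LinearMap.mulLeft F (gen F r s i)) hx
  rw [map_span] at hmap
  refine span_le.mpr ?_ hmap
  rintro _ ⟨_, ⟨I, rfl⟩, rfl⟩
  obtain ⟨c, J, -, he⟩ := gen_mul_eProd (F := F) I i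
  rw [SetLike.mem_coe, LinearMap.mulLeft_apply, he]
  exact smul_mem _ _ (subset_span ⟨J, rfl⟩)

theorem span_range_eProd : span F (Set.range (eProd F r s)) = ⊤ := by
  rw [eq_top_iff]
  rintro x -
  induction x using CliffordAlgebra.left_induction with
  | algebraMap c =>
    rw [Algebra.algebraMap_eq_smul_one, ← eProd_empty]
    exact smul_mem _ _ (subset_span ⟨∅, rfl⟩)
  | add x y hx hy => exact add_mem hx hy
  | ι_mul x v hx =>
    have hv : v = ∑ i, v i • Pi.single i (1 : F) := by
      ext j
      simp [Pi.single_apply]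
    rw [hv, map_sum, Finset.sum_mul]
    refine sum_mem fun i _ => ?_
    rw [map_smul, smul_mul_assoc]
    exact smul_mem _ _ (gen_mul_mem_span_range_eProd hx i)

theorem conj_eProd (I : Finset (Fin (r + s))) :
    conj F r s (eProd F r s I) = (-1 : F) ^ (I.card + 1).choose 2 • eProd F r s I := by
  have hanti : ((I.sort (· ≤ ·)).map (gen F r s)).Pairwise fun a b => b * a = -(a * b) :=
    List.Pairwise.map _ (fun _ _ => gen_mul_gen_of_ne) (I.sort_nodup _)
  have hrev := List.prod_reverse_of_pairwise_anticomm (R := F) hanti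
  have hl : (((I.sort (· ≤ ·)).map fun i => Pi.single i 1).map (ι (Qf F r s))) =
      (I.sort (· ≤ ·)).map (gen F r s) := by
    rw [List.map_map]; rfl
  rw [conj, LinearMap.comp_apply, AlgHom.toLinearMap_apply, eProd_eq_prod_map_ι,
    involute_prod_map_ι, map_smul, reverse_prod_map_ι, hl, hrev, smul_smul, ← pow_add]
  simp only [List.length_map, Finset.length_sort, Nat.choose_succ_succ', Nat.choose_one_right]

theorem conj_eProd_mul_self (I : Finset (Fin (r + s))) :
    conj F r s (eProd F r s I) * eProd F r s I = algebraMap F _ (∏ i ∈ I, genSign F r s i) := by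
  rw [conj, LinearMap.comp_apply, AlgHom.toLinearMap_apply, eProd_eq_prod_map_ι,
    reverse_involute_prod_map_ι_mul_self, List.map_map, ← Finset.prod_map_sort]
  simp [Function.comp_def, Qf_single_one]

theorem prod_genSign_eq_one_or (I : Finset (Fin (r + s))) :
    ∏ i ∈ I, genSign F r s i = 1 ∨ ∏ i ∈ I, genSign F r s i = -1 :=
  Finset.prod_induction _ (fun x => x = 1 ∨ x = -1)
    (by rintro a b (rfl | rfl) (rfl | rfl) <;> simp) (Or.inl rfl)
    (fun i _ => by unfold genSign; split_ifs <;> simp)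

def IsCartanInvolution (β : Cl F r s ≃ₐ[F] Cl F r s) : Prop :=
  ∀ v : Fin (r + s) → F,
    β (ι (Qf F r s) v) = ι (Qf F r s) (fun i => if (i : ℕ) < r then v i else -v i)

theorem IsCartanInvolution.apply_gen {β : Cl F r s ≃ₐ[F] Cl F r s} (hβ : IsCartanInvolution β)
    (i : Fin (r + s)) : β (gen F r s i) = genSign F r s i • gen F r s i := by
  rw [gen, hβ, ← map_smul]
  congr 1
  ext j
  by_cases hji : j = i
  · subst hji; by_cases h : (j : ℕ) < r <;> simp [genSign, h]
  · simp [hji]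

theorem IsCartanInvolution.apply_eProd {β : Cl F r s ≃ₐ[F] Cl F r s}
    (hβ : IsCartanInvolution β) (I : Finset (Fin (r + s))) :
    β (eProd F r s I) = (∏ i ∈ I, genSign F r s i) • eProd F r s I := by
  rw [eProd, map_list_prod, List.map_map, ← Finset.prod_map_sort]
  generalize I.sort (· ≤ ·) = l
  induction l with
  | nil => simp
  | cons i l ih =>
    simp only [List.map_cons, List.prod_cons, Function.comp_apply, hβ.apply_gen, ih,
      smul_mul_smul_comm]

theorem algebraMap_injective (hF : ringChar F ≠ 2) :
    Function.Injective (algebraMap F (Cl F r s)) :=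
  letI := invertibleOfNonzero (Ring.two_ne_zero hF)
  (algebraMap F _).injective

theorem eProd_mul_self_of_mem_Gsub {I : Finset (Fin (r + s))} (hI : eProd F r s I ∈ Gsub F r s) :
    eProd F r s I * eProd F r s I = -algebraMap F _ (∏ i ∈ I, genSign F r s i) := by
  rw [← conj_eProd_mul_self, (mem_Gsub _).mp hI, neg_mul, neg_neg]

theorem nonempty_of_eProd_mem_Gsub (hF : ringChar F ≠ 2) {I : Finset (Fin (r + s))}
    (hI : eProd F r s I ∈ Gsub F r s) : I.Nonempty := by
  rw [Finset.nonempty_iff_ne_empty]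
  rintro rfl
  have h := eProd_mul_self_of_mem_Gsub hI
  rw [eProd_empty, Finset.prod_empty, one_mul, ← map_one (algebraMap F _), ← map_neg] at h
  exact Ring.neg_one_ne_one_of_char_ne_two hF (algebraMap_injective hF h).symm

theorem IsCartanInvolution.apply_eProd_eq_smul_iff {β : Cl F r s ≃ₐ[F] Cl F r s}
    (hβ : IsCartanInvolution β) (hF : ringChar F ≠ 2) {I : Finset (Fin (r + s))}
    (hI : eProd F r s I ∈ Gsub F r s) (τ : F) :
    β (eProd F r s I) = τ • eProd F r s I ↔ eProd F r s I * eProd F r s I = -algebraMap F _ τ := by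
  have hsq := eProd_mul_self_of_mem_Gsub hI
  have hne : eProd F r s I ≠ 0 := by
    intro h0
    rw [h0, mul_zero, zero_eq_neg, map_eq_zero_iff _ (algebraMap_injective hF)] at hsq
    rcases prod_genSign_eq_one_or (F := F) I with h | h <;> simp [h] at hsq
  rw [hβ.apply_eProd, (smul_left_injective F hne).eq_iff, hsq, neg_inj,
    (algebraMap_injective hF).eq_iff]

theorem Gsub_eq_eigenspace : Gsub F r s = Module.End.eigenspace (conj F r s) (-1) := by
  ext x
  rw [mem_Gsub, Module.End.mem_eigenspace_iff, neg_one_smul]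

theorem Gsub_eq_span_image (hF : ringChar F ≠ 2) :
    Gsub F r s = span F (eProd F r s '' {I | eProd F r s I ∈ Gsub F r s}) := by
  have h := Module.End.eigenspace_inf_span_image (Ring.two_ne_zero hF) (b := eProd F r s)
    (S := Set.univ) (fun I _ => by
      rw [conj_eProd]
      rcases neg_one_pow_eq_or F ((I.card + 1).choose 2) with h | h <;> simp [h])
    (Or.inr rfl)
  rw [Set.image_univ, span_range_eProd, inf_top_eq, ← Gsub_eq_eigenspace] at h
  simpa only [Set.mem_univ, true_and, neg_one_smul, ← mem_Gsub] using h

theorem IsCartanInvolution.eigenspace_inf_Gsub {β : Cl F r s ≃ₐ[F] Cl F r s}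
    (hβ : IsCartanInvolution β) (hF : ringChar F ≠ 2) {τ : F} (hτ : τ = 1 ∨ τ = -1) :
    Module.End.eigenspace β.toLinearMap τ ⊓ Gsub F r s =
      span F {x | ∃ I : Finset (Fin (r + s)), I.Nonempty ∧ x = eProd F r s I ∧
        x ∈ Gsub F r s ∧ x * x = -algebraMap F _ τ} := by
  conv_lhs => rw [Gsub_eq_span_image hF]
  rw [Module.End.eigenspace_inf_span_image (Ring.two_ne_zero hF) _ hτ]
  · congr 1
    ext x
    constructor
    · rintro ⟨I, ⟨hI, hβI⟩, rfl⟩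
      exact ⟨I, nonempty_of_eProd_mem_Gsub hF hI, rfl, hI,
        (hβ.apply_eProd_eq_smul_iff hF hI τ).mp hβI⟩
    · rintro ⟨I, -, rfl, hI, hsq⟩
      exact ⟨I, ⟨hI, (hβ.apply_eProd_eq_smul_iff hF hI τ).mpr hsq⟩, rfl⟩
  · rintro I -
    rw [AlgEquiv.toLinearMap_apply, hβ.apply_eProd]
    rcases prod_genSign_eq_one_or (F := F) I with h | h <;> simp [h]

end Monomials

theorem statement1_general (F : Type*) [Field F] (hF : ringChar F ≠ 2) (r s : ℕ)
    (β : Cl F r s ≃ₐ[F] Cl F r s)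
    (hβ : ∀ v : Fin (r + s) → F,
      β (ι (Qf F r s) v) = ι (Qf F r s) (fun i => if (i : ℕ) < r then v i else -v i)) :
    Ksub F r s β = Submodule.span F {x | ∃ I : Finset (Fin (r + s)), I.Nonempty ∧
        x = eProd F r s I ∧ x ∈ Gsub F r s ∧ x * x = -1} ∧
    Psub F r s β = Submodule.span F {x | ∃ I : Finset (Fin (r + s)), I.Nonempty ∧
        x = eProd F r s I ∧ x ∈ Gsub F r s ∧ x * x = 1} := by
  have hK : Ksub F r s β = Module.End.eigenspace β.toLinearMap 1 ⊓ Gsub F r s := by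
    ext x; simp [Ksub, sub_eq_zero]
  have hP : Psub F r s β = Module.End.eigenspace β.toLinearMap (-1) ⊓ Gsub F r s := by
    ext x; simp [Psub, add_eq_zero_iff_eq_neg]
  constructor
  · simpa [hK] using IsCartanInvolution.eigenspace_inf_Gsub hβ hF (τ := 1) (Or.inl rfl)
  · simpa [hP] using IsCartanInvolution.eigenspace_inf_Gsub hβ hF (τ := -1) (Or.inr rfl)

/-- 𝔎 is the span of the e_I ∈ 𝔊 with e_I² = -1, and 𝔓 is the span of the
e_I ∈ 𝔊 with e_I² = +1. -/
theorem statement1 (F : Type*) [Field F] (hF : ringChar F ≠ 2) (r s : ℕ) (hn : 0 < r + s)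
    (β : Cl F r s ≃ₐ[F] Cl F r s)
    (hβ : ∀ v : Fin (r + s) → F,
      β (ι (Qf F r s) v) = ι (Qf F r s) (fun i => if (i : ℕ) < r then v i else -v i)) :
    Ksub F r s β = Submodule.span F {x | ∃ I : Finset (Fin (r + s)), I.Nonempty ∧
        x = eProd F r s I ∧ x ∈ Gsub F r s ∧ x * x = -1} ∧
    Psub F r s β = Submodule.span F {x | ∃ I : Finset (Fin (r + s)), I.Nonempty ∧
        x = eProd F r s I ∧ x ∈ Gsub F r s ∧ x * x = 1} :=
  statement1_general F hF r s β hβ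

end CliffPaper
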